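/- For each j ∈ {1, …, n}, the per-interval error has the closed form Δ_X(I_j) = E_{a_j, μ_j}[μ_j − X] (the partial expectation of μ_j − X over the event {a_j < X ≤ μ_j}), and satisfies Δ_X(I_j) ≤ p_j · (b_j − a_j)/4. -/

import Mathlib

/-!
On `I_j` the error `f̃ - f_X` is a sum over the cells `I_k` of the Jensen gaps
`p_k min(s, μ_k) - E[min(s, X); X ∈ I_k]` of the concave map `min(s, ·)`. For `s ∈ I_j` every
other cell lies on one side of `s`, where `min(s, ·)` is affine, so only the `j`-th gap survives.
A Jensen gap of `min(s, ·)` is nonnegative and largest at `s = μ_j`, where it equals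
`E[(μ_j - X)⁺; X ∈ I_j]`. For `x ∈ [a_j, b_j]` one has
`(b_j - a_j)(μ_j - x)⁺ ≤ (μ_j - a_j)(b_j - x)`; integrating over `I_j` gives
`(b_j - a_j) Δ ≤ p_j (μ_j - a_j)(b_j - μ_j)`, and AM-GM finishes.
-/

open MeasureTheory

/-- The `j`-th region of the partition of `ℝ` induced by points `q 0 < q 1 < ⋯ < q n`:
`I_0 = (−∞, q 0]`, `I_j = (q (j−1), q j]` for `1 ≤ j ≤ n`, and `I_{n+1} = (q n, ∞)`. -/
noncomputable def seg (q : ℕ → ℝ) (n j : ℕ) : Set ℝ :=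
  if j = 0 then Set.Iic (q 0)
  else if j ≤ n then Set.Ioc (q (j - 1)) (q j)
  else Set.Ioi (q n)

/-- `p_j = P(X ∈ I_j)`. -/
noncomputable def segProb {Ω : Type*} [MeasurableSpace Ω]
    (P : Measure Ω) (X : Ω → ℝ) (q : ℕ → ℝ) (n j : ℕ) : ℝ :=
  (P {ω | X ω ∈ seg q n j}).toReal

/-- `μ_j = E[X | X ∈ I_j] = E[1_{X ∈ I_j} X] / p_j`. -/
noncomputable def segMean {Ω : Type*} [MeasurableSpace Ω]
    (P : Measure Ω) (X : Ω → ℝ) (q : ℕ → ℝ) (n j : ℕ) : ℝ :=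
  (∫ ω in {ω | X ω ∈ seg q n j}, X ω ∂P) / segProb P X q n j

/-- The induced piecewise linear approximation `f̃(s) = ∑_{j=0}^{n+1} p_j · min(s, μ_j)`. -/
noncomputable def ftilde {Ω : Type*} [MeasurableSpace Ω]
    (P : Measure Ω) (X : Ω → ℝ) (q : ℕ → ℝ) (n : ℕ) (s : ℝ) : ℝ :=
  ∑ j ∈ Finset.range (n + 2), segProb P X q n j * min s (segMean P X q n j)

open Set

section JensenGap

variable {Ω : Type*} [MeasurableSpace Ω]

noncomputable def minJensenGap (ν : Measure Ω) (Y : Ω → ℝ) (s : ℝ) : ℝ :=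
  ν.real univ * min s (⨍ ω, Y ω ∂ν) - ∫ ω, min s (Y ω) ∂ν

variable {ν : Measure Ω} [IsFiniteMeasure ν] {Y : Ω → ℝ}

lemma integral_eq_measureReal_mul_average (Y : Ω → ℝ) :
    ∫ ω, Y ω ∂ν = ν.real univ * ⨍ ω, Y ω ∂ν :=
  (measure_smul_average ν Y).symm

lemma integral_min_le_mul_min_average (hY : Integrable Y ν) (s : ℝ) :
    ∫ ω, min s (Y ω) ∂ν ≤ ν.real univ * min s (⨍ ω, Y ω ∂ν) := by
  have hmin : Integrable (fun ω => min s (Y ω)) ν := (integrable_const s).inf hY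
  rw [mul_min_of_nonneg _ _ measureReal_nonneg, ← integral_eq_measureReal_mul_average]
  refine le_min ?_ (integral_mono hmin hY fun ω => min_le_right _ _)
  simpa using integral_mono hmin (integrable_const s) fun ω => min_le_left _ _

lemma minJensenGap_nonneg (hY : Integrable Y ν) (s : ℝ) : 0 ≤ minJensenGap ν Y s :=
  sub_nonneg.mpr (integral_min_le_mul_min_average hY s)

lemma minJensenGap_le_minJensenGap_average (hY : Integrable Y ν) (s : ℝ) :
    minJensenGap ν Y s ≤ minJensenGap ν Y (⨍ ω, Y ω ∂ν) := by
  have hmin (t : ℝ) : Integrable (fun ω => min t (Y ω)) ν := (integrable_const t).inf hY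
  simp only [minJensenGap, min_self]
  rcases le_total s (⨍ ω, Y ω ∂ν) with hsm | hms
  · have hlip (y : ℝ) : min (⨍ ω, Y ω ∂ν) y - min s y ≤ (⨍ ω, Y ω ∂ν) - s := by
      rcases le_total s y with h | h <;> rcases le_total (⨍ ω, Y ω ∂ν) y with h' | h' <;>
        simp only [min_eq_left, min_eq_right, h, h'] <;> linarith
    have : ∫ ω, min (⨍ ω, Y ω ∂ν) (Y ω) ∂ν - ∫ ω, min s (Y ω) ∂ν
        ≤ ν.real univ * ((⨍ ω, Y ω ∂ν) - s) := by
      rw [← integral_sub (hmin _) (hmin s)]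
      simpa using integral_mono ((hmin _).sub (hmin s)) (integrable_const _) fun ω => hlip (Y ω)
    rw [min_eq_left hsm]
    linarith
  · have : ∫ ω, min (⨍ ω, Y ω ∂ν) (Y ω) ∂ν ≤ ∫ ω, min s (Y ω) ∂ν :=
      integral_mono (hmin _) (hmin s) fun ω => min_le_min_right _ hms
    rw [min_eq_right hms]
    linarith

lemma minJensenGap_average_eq_integral_max (hY : Integrable Y ν) :
    minJensenGap ν Y (⨍ ω, Y ω ∂ν) = ∫ ω, max ((⨍ ω, Y ω ∂ν) - Y ω) 0 ∂ν := by
  have hmin : Integrable (fun ω => min (⨍ ω, Y ω ∂ν) (Y ω)) ν := (integrable_const _).inf hY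
  rw [minJensenGap, min_self, ← smul_eq_mul, ← integral_const,
    ← integral_sub (integrable_const _) hmin]
  congr 1 with ω
  rw [← max_sub_sub_left, sub_self, max_comm]

lemma minJensenGap_average_eq_setIntegral (hY : Integrable Y ν) :
    minJensenGap ν Y (⨍ ω, Y ω ∂ν)
      = ∫ ω in {ω | Y ω ≤ ⨍ ω, Y ω ∂ν}, ((⨍ ω, Y ω ∂ν) - Y ω) ∂ν := by
  have hs : NullMeasurableSet {ω | Y ω ≤ ⨍ ω, Y ω ∂ν} ν :=
    hY.aemeasurable.nullMeasurable measurableSet_Iic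
  rw [minJensenGap_average_eq_integral_max hY, ← integral_indicator₀ hs]
  congr 1 with ω
  by_cases h : Y ω ≤ ⨍ ω, Y ω ∂ν
  · simp [h]
  · simp [h, (not_le.mp h).le]

lemma minJensenGap_eq_zero_of_ae_le (hY : Integrable Y ν) {s : ℝ} (h : ∀ᵐ ω ∂ν, Y ω ≤ s) :
    minJensenGap ν Y s = 0 := by
  refine le_antisymm ?_ (minJensenGap_nonneg hY s)
  have : ∫ ω, min s (Y ω) ∂ν = ν.real univ * ⨍ ω, Y ω ∂ν := by
    rw [← integral_eq_measureReal_mul_average]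
    exact integral_congr_ae (h.mono fun ω hω => min_eq_right hω)
  rw [minJensenGap, this, sub_nonpos]
  exact mul_le_mul_of_nonneg_left (min_le_right _ _) measureReal_nonneg

lemma minJensenGap_eq_zero_of_ae_ge (hY : Integrable Y ν) {s : ℝ} (h : ∀ᵐ ω ∂ν, s ≤ Y ω) :
    minJensenGap ν Y s = 0 := by
  refine le_antisymm ?_ (minJensenGap_nonneg hY s)
  have : ∫ ω, min s (Y ω) ∂ν = ν.real univ * s := by
    rw [← smul_eq_mul, ← integral_const]
    exact integral_congr_ae (h.mono fun ω hω => min_eq_left hω)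
  rw [minJensenGap, this, sub_nonpos]
  exact mul_le_mul_of_nonneg_left (min_le_left _ _) measureReal_nonneg

lemma lt_average_of_ae_lt [NeZero ν] (hY : Integrable Y ν) {A : ℝ} (h : ∀ᵐ ω ∂ν, A < Y ω) :
    A < ⨍ ω, Y ω ∂ν := by
  obtain ⟨ω, hω, hle⟩ := exists_notMem_null_le_average (NeZero.ne ν) hY (ae_iff.mp h)
  exact (not_not.mp hω).trans_le hle

lemma mul_minJensenGap_average_le (hY : Integrable Y ν) {A B : ℝ}
    (hAB : ∀ᵐ ω ∂ν, Y ω ∈ Icc A B) :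
    (B - A) * minJensenGap ν Y (⨍ ω, Y ω ∂ν)
      ≤ ν.real univ * (((⨍ ω, Y ω ∂ν) - A) * (B - ⨍ ω, Y ω ∂ν)) := by
  rcases eq_zero_or_neZero ν with rfl | hν
  · simp [minJensenGap]
  obtain ⟨hAm, hmB⟩ := (convex_Icc A B).average_mem isClosed_Icc hAB hY
  have key : ∀ y ∈ Icc A B,
      (B - A) * max ((⨍ ω, Y ω ∂ν) - y) 0 ≤ ((⨍ ω, Y ω ∂ν) - A) * (B - y) := by
    rintro y ⟨hAy, hyB⟩
    rcases le_total y (⨍ ω, Y ω ∂ν) with h | h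
    · rw [max_eq_left (by linarith)]; nlinarith
    · rw [max_eq_right (by linarith)]; nlinarith
  rw [minJensenGap_average_eq_integral_max hY, ← integral_const_mul]
  calc ∫ ω, (B - A) * max ((⨍ ω, Y ω ∂ν) - Y ω) 0 ∂ν
      ≤ ∫ ω, ((⨍ ω, Y ω ∂ν) - A) * (B - Y ω) ∂ν :=
        integral_mono_ae ((((integrable_const _).sub hY).sup (integrable_const 0)).const_mul _)
          (((integrable_const B).sub hY).const_mul _) (hAB.mono fun ω => key (Y ω))
    _ = ν.real univ * (((⨍ ω, Y ω ∂ν) - A) * (B - ⨍ ω, Y ω ∂ν)) := by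
        rw [integral_const_mul, integral_sub (integrable_const B) hY, integral_const,
          integral_eq_measureReal_mul_average, smul_eq_mul]
        ring

lemma minJensenGap_average_le (hY : Integrable Y ν) {A B : ℝ} (hlt : A < B)
    (hAB : ∀ᵐ ω ∂ν, Y ω ∈ Icc A B) :
    minJensenGap ν Y (⨍ ω, Y ω ∂ν) ≤ ν.real univ * (B - A) / 4 := by
  have h := mul_minJensenGap_average_le hY hAB
  have amgm : ((⨍ ω, Y ω ∂ν) - A) * (B - ⨍ ω, Y ω ∂ν) ≤ (B - A) ^ 2 / 4 := by
    nlinarith [sq_nonneg ((⨍ ω, Y ω ∂ν) - A - (B - ⨍ ω, Y ω ∂ν))]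
  rw [le_div_iff₀ four_pos, ← mul_le_mul_iff_of_pos_left (sub_pos.mpr hlt)]
  nlinarith [mul_le_mul_of_nonneg_left amgm (measureReal_nonneg (μ := ν) (s := univ))]

end JensenGap

section Partition

variable (q : ℕ → ℝ) (n : ℕ)

lemma measurableSet_seg (k : ℕ) : MeasurableSet (seg q n k) := by
  unfold seg
  split_ifs <;> measurability

lemma seg_eq_Ioc {j : ℕ} (hj1 : 1 ≤ j) (hjn : j ≤ n) :
    seg q n j = Ioc (q (j - 1)) (q j) := by
  rw [seg, if_neg (by omega), if_pos hjn]

variable {q n}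

lemma seg_subset_Iic {k : ℕ} (hk : k ≤ n) : seg q n k ⊆ Iic (q k) := by
  unfold seg
  split_ifs with h0
  · subst h0; exact subset_rfl
  · exact Ioc_subset_Iic_self

lemma seg_subset_Ioi {k : ℕ} (hk1 : 1 ≤ k) (hk : k ≤ n + 1) :
    seg q n k ⊆ Ioi (q (k - 1)) := by
  unfold seg
  split_ifs with h0 hkn
  · omega
  · exact Ioc_subset_Ioi_self
  · obtain rfl : k = n + 1 := by omega
    exact subset_rfl

lemma exists_mem_seg (x : ℝ) : ∃ k < n + 2, x ∈ seg q n k := by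
  classical
  have h : ∃ k, x ≤ q k ∨ n < k := ⟨n + 1, Or.inr n.lt_succ_self⟩
  have hmin : ∀ i < Nat.find h, q i < x ∧ i ≤ n := fun i hi => by
    simpa using Nat.find_min h hi
  refine ⟨Nat.find h, Nat.lt_succ_of_le (Nat.find_min' h (Or.inr n.lt_succ_self)), ?_⟩
  have hspec := Nat.find_spec h
  unfold seg
  split_ifs with h0 hn
  · simpa [h0] using hspec
  · exact ⟨(hmin _ (by omega)).1, hspec.resolve_right (by omega)⟩
  · exact (hmin n (by omega)).1

lemma eq_of_mem_seg_of_mem_seg (hq : MonotoneOn q (Iic n)) {x : ℝ} {k l : ℕ} (hkl : k ≤ l)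
    (hl : l < n + 2) (hxk : x ∈ seg q n k) (hxl : x ∈ seg q n l) : k = l := by
  by_contra hne
  have hqkl : q k ≤ q (l - 1) := hq (by simp; omega) (by simp; omega) (by omega)
  have h1 := seg_subset_Iic (by omega) hxk
  have h2 := seg_subset_Ioi (by omega) (by omega) hxl
  simp only [mem_Iic, mem_Ioi] at h1 h2
  linarith

lemma sum_indicator_seg (hq : MonotoneOn q (Iic n)) (g : ℝ → ℝ) (x : ℝ) :
    ∑ k ∈ Finset.range (n + 2), (seg q n k).indicator g x = g x := by
  obtain ⟨k, hk, hxk⟩ := exists_mem_seg (q := q) (n := n) x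
  rw [Finset.sum_eq_single_of_mem k (Finset.mem_range.mpr hk), indicator_of_mem hxk]
  intro l hl hlk
  refine indicator_of_notMem (fun hxl => hlk ?_) g
  rcases le_total k l with h | h
  · exact (eq_of_mem_seg_of_mem_seg hq h (Finset.mem_range.mp hl) hxk hxl).symm
  · exact eq_of_mem_seg_of_mem_seg hq h hk hxl hxk

end Partition

section Approximation

variable {Ω : Type*} [MeasurableSpace Ω] {P : Measure Ω} {X : Ω → ℝ} {q : ℕ → ℝ} {n : ℕ}

lemma segProb_eq_measureReal_restrict (k : ℕ) :
    segProb P X q n k = (P.restrict {ω | X ω ∈ seg q n k}).real univ := by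
  rw [measureReal_restrict_apply_univ, measureReal_def, segProb]

lemma segMean_eq_average_restrict (k : ℕ) :
    segMean P X q n k = ⨍ ω, X ω ∂(P.restrict {ω | X ω ∈ seg q n k}) := by
  rw [segMean, average_eq, smul_eq_mul, segProb_eq_measureReal_restrict, div_eq_inv_mul]

lemma nullMeasurableSet_seg (hX : AEMeasurable X P) (k : ℕ) :
    NullMeasurableSet {ω | X ω ∈ seg q n k} P :=
  hX.nullMeasurable (measurableSet_seg q n k)

lemma ae_restrict_mem_seg (hX : AEMeasurable X P) (k : ℕ) :
    ∀ᵐ ω ∂P.restrict {ω | X ω ∈ seg q n k}, X ω ∈ seg q n k :=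
  ae_restrict_mem₀ (nullMeasurableSet_seg hX k)

lemma integral_eq_sum_setIntegral_seg (hX : AEMeasurable X P) (hq : MonotoneOn q (Iic n))
    {g : ℝ → ℝ} (hg : Integrable (fun ω => g (X ω)) P) :
    ∫ ω, g (X ω) ∂P
      = ∑ k ∈ Finset.range (n + 2), ∫ ω in {ω | X ω ∈ seg q n k}, g (X ω) ∂P := by
  rw [Finset.sum_congr rfl fun k _ => (integral_indicator₀ (nullMeasurableSet_seg hX k)).symm,
    ← integral_finsetSum _ fun k _ => hg.indicator₀ (nullMeasurableSet_seg hX k)]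
  congr 1 with ω
  exact ((Finset.sum_congr rfl fun k _ => indicator_comp_right X).trans
    (sum_indicator_seg hq g (X ω))).symm

lemma ftilde_sub_integral_min_eq_sum [IsFiniteMeasure P] (hX : Integrable X P)
    (hq : MonotoneOn q (Iic n)) (s : ℝ) :
    ftilde P X q n s - ∫ ω, min s (X ω) ∂P
      = ∑ k ∈ Finset.range (n + 2), minJensenGap (P.restrict {ω | X ω ∈ seg q n k}) X s := by
  have hmin : Integrable (fun ω => min s (X ω)) P := (integrable_const s).inf hX
  rw [integral_eq_sum_setIntegral_seg hX.aemeasurable hq hmin, ftilde,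
    ← Finset.sum_sub_distrib]
  simp_rw [segProb_eq_measureReal_restrict, segMean_eq_average_restrict, minJensenGap]

lemma ftilde_sub_integral_min_eq_minJensenGap [IsFiniteMeasure P] (hX : Integrable X P)
    (hq : MonotoneOn q (Iic n)) {j : ℕ} (hj1 : 1 ≤ j) (hjn : j ≤ n) {s : ℝ}
    (hs : s ∈ Ioc (q (j - 1)) (q j)) :
    ftilde P X q n s - ∫ ω, min s (X ω) ∂P
      = minJensenGap (P.restrict {ω | X ω ∈ seg q n j}) X s := by
  rw [ftilde_sub_integral_min_eq_sum hX hq,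
    Finset.sum_eq_single_of_mem j (Finset.mem_range.mpr (by omega))]
  intro k hk hkj
  replace hk := Finset.mem_range.mp hk
  have hmem := ae_restrict_mem_seg hX.aemeasurable (q := q) (n := n) k
  rcases lt_or_gt_of_ne hkj with hlt | hgt
  · refine minJensenGap_eq_zero_of_ae_le hX.restrict (hmem.mono fun ω hω => ?_)
    have hqk : q k ≤ q (j - 1) := hq (by simp; omega) (by simp; omega) (by omega)
    have hXk := seg_subset_Iic (by omega) hω
    simp only [mem_Iic] at hXk
    linarith [hs.1]
  · refine minJensenGap_eq_zero_of_ae_ge hX.restrict (hmem.mono fun ω hω => ?_)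
    have hqk : q j ≤ q (k - 1) := hq (by simp; omega) (by simp; omega) (by omega)
    have hXk := seg_subset_Ioi (by omega) (by omega) hω
    simp only [mem_Ioi] at hXk
    linarith [hs.2]

lemma sSup_abs_ftilde_sub_integral_min [IsFiniteMeasure P] (hX : Integrable X P)
    (hq : MonotoneOn q (Iic n)) {j : ℕ} (hj1 : 1 ≤ j) (hjn : j ≤ n)
    (hmean : segMean P X q n j ∈ Ioc (q (j - 1)) (q j)) :
    sSup ((fun s => |ftilde P X q n s - ∫ ω, min s (X ω) ∂P|) '' Ioc (q (j - 1)) (q j))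
      = minJensenGap (P.restrict {ω | X ω ∈ seg q n j}) X (segMean P X q n j) := by
  rw [image_congr fun s hs => by
    rw [ftilde_sub_integral_min_eq_minJensenGap hX hq hj1 hjn hs,
      abs_of_nonneg (minJensenGap_nonneg hX.restrict s)]]
  refine IsGreatest.csSup_eq ⟨mem_image_of_mem _ hmean, forall_mem_image.2 fun s _ => ?_⟩
  rw [segMean_eq_average_restrict]
  exact minJensenGap_le_minJensenGap_average hX.restrict s

lemma minJensenGap_segMean_eq_setIntegral [IsFiniteMeasure P] (hX : Integrable X P)
    {j : ℕ} (hj1 : 1 ≤ j) (hjn : j ≤ n) (hmean : segMean P X q n j ≤ q j) :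
    minJensenGap (P.restrict {ω | X ω ∈ seg q n j}) X (segMean P X q n j)
      = ∫ ω in {ω | X ω ∈ Ioc (q (j - 1)) (segMean P X q n j)},
          (segMean P X q n j - X ω) ∂P := by
  rw [segMean_eq_average_restrict] at hmean ⊢
  rw [minJensenGap_average_eq_setIntegral hX.restrict,
    Measure.restrict_restrict₀' (nullMeasurableSet_seg hX.aemeasurable j)]
  generalize ⨍ ω in {ω | X ω ∈ seg q n j}, X ω ∂P = m at hmean ⊢
  congr 2
  ext ω
  simp only [mem_inter_iff, mem_ofPred_eq, seg_eq_Ioc q n hj1 hjn, mem_Ioc]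
  constructor
  · rintro ⟨hle, hA, -⟩
    exact ⟨hA, hle⟩
  · rintro ⟨hA, hle⟩
    exact ⟨hle, hA, hle.trans hmean⟩

end Approximation

theorem perInterval_error_closed_form_general {Ω : Type*} [MeasurableSpace Ω]
    (P : Measure Ω) [IsProbabilityMeasure P]
    (X : Ω → ℝ) (hX : Integrable X P)
    (n : ℕ)
    (q : ℕ → ℝ)
    (hmono : ∀ i < n, q i < q (i + 1))
    (hpos : ∀ j ≤ n + 1, 0 < segProb P X q n j) :
    ∀ j, 1 ≤ j → j ≤ n →
      (sSup ((fun s => |ftilde P X q n s - ∫ ω, min s (X ω) ∂P|)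
              '' Set.Ioc (q (j - 1)) (q j))
          = ∫ ω in {ω | X ω ∈ Set.Ioc (q (j - 1)) (segMean P X q n j)},
              (segMean P X q n j - X ω) ∂P) ∧
        sSup ((fun s => |ftilde P X q n s - ∫ ω, min s (X ω) ∂P|)
              '' Set.Ioc (q (j - 1)) (q j))
          ≤ segProb P X q n j * (q j - q (j - 1)) / 4 := by
  intro j hj1 hjn
  have hq : MonotoneOn q (Iic n) := (strictMonoOn_Iic_of_lt_succ hmono).monotoneOn
  have hlt : q (j - 1) < q j := by
    simpa [Nat.sub_add_cancel hj1] using hmono (j - 1) (by omega)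
  set ν := P.restrict {ω | X ω ∈ seg q n j}
  have hν : ∀ᵐ ω ∂ν, X ω ∈ Ioc (q (j - 1)) (q j) :=
    seg_eq_Ioc q n hj1 hjn ▸ ae_restrict_mem_seg hX.aemeasurable j
  have : NeZero ν := ⟨fun h => by
    simpa [segProb_eq_measureReal_restrict, ν, h] using hpos j (by omega)⟩
  have hmean : segMean P X q n j ∈ Ioc (q (j - 1)) (q j) := by
    rw [segMean_eq_average_restrict]
    exact ⟨lt_average_of_ae_lt hX.restrict (hν.mono fun _ h => h.1),
      (convex_Iic _).average_mem isClosed_Iic (hν.mono fun _ h => h.2) hX.restrict⟩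
  rw [sSup_abs_ftilde_sub_integral_min hX hq hj1 hjn hmean]
  refine ⟨minJensenGap_segMean_eq_setIntegral hX hj1 hjn hmean.2, ?_⟩
  rw [segMean_eq_average_restrict, segProb_eq_measureReal_restrict]
  exact minJensenGap_average_le hX.restrict hlt (hν.mono fun _ h => Ioc_subset_Icc_self h)

/-- For each `j ∈ {1,…,n}`, the per-interval error
`Δ_X(I_j) = sup_{s ∈ I_j} |f̃(s) − f_X(s)|` has the closed form
`Δ_X(I_j) = E_{a_j, μ_j}[μ_j − X]` (partial expectation over `{a_j < X ≤ μ_j}`)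
and satisfies `Δ_X(I_j) ≤ p_j (b_j − a_j)/4`. -/
theorem perInterval_error_closed_form {Ω : Type*} [MeasurableSpace Ω]
    (P : Measure Ω) [IsProbabilityMeasure P]
    (X : Ω → ℝ) (hX : Integrable X P)
    (a b : ℝ) (hab : a < b) (n : ℕ) (hn : 1 ≤ n)
    (q : ℕ → ℝ) (hq0 : q 0 = a) (hqn : q n = b)
    (hmono : ∀ i < n, q i < q (i + 1))
    (hpos : ∀ j ≤ n + 1, 0 < segProb P X q n j) :
    ∀ j, 1 ≤ j → j ≤ n →
      (sSup ((fun s => |ftilde P X q n s - ∫ ω, min s (X ω) ∂P|)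
              '' Set.Ioc (q (j - 1)) (q j))
          = ∫ ω in {ω | X ω ∈ Set.Ioc (q (j - 1)) (segMean P X q n j)},
              (segMean P X q n j - X ω) ∂P) ∧
        sSup ((fun s => |ftilde P X q n s - ∫ ω, min s (X ω) ∂P|)
              '' Set.Ioc (q (j - 1)) (q j))
          ≤ segProb P X q n j * (q j - q (j - 1)) / 4 :=
  perInterval_error_closed_form_general P X hX n q hmono hpos
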